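/- Let T be a closed equilateral triangle in ℝ² of side length strictly greater than 2, and let P be the six-point set consisting of the three vertices of T together with the three midpoints of its sides. Then any closed unit equilateral triangle in ℝ² contains at most one point of P. -/
import Mathlib

noncomputable section

abbrev Pt : Type := EuclideanSpace ℝ (Fin 2)

/-- `T` is a closed equilateral triangle of side length `s`: the convex hull of
three points at pairwise distance `s > 0`. -/
def IsEquilateralTriangle (T : Set Pt) (s : ℝ) : Prop :=
  0 < s ∧ ∃ A B C : Pt, dist A B = s ∧ dist B C = s ∧ dist C A = s ∧
    T = convexHull ℝ {A, B, C}

lemma dist_midpoint_half (A B : Pt) : dist A (midpoint ℝ A B) = dist A B / 2 := by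
  rw [dist_left_midpoint]; norm_num; ring

lemma dist_mid_mid (A B C : Pt) :
    dist (midpoint ℝ A B) (midpoint ℝ B C) = dist A C / 2 := by
  have h : midpoint ℝ A B - midpoint ℝ B C = (2⁻¹ : ℝ) • (A - C) := by
    simp [midpoint_eq_smul_add]; module
  rw [dist_eq_norm, h, norm_smul, dist_eq_norm]
  norm_num; ring

lemma dist_mid_opp (A B C : Pt) (s : ℝ) (hAB : dist A B = s) (hCA : dist C A = s) :
    s / 2 ≤ dist (midpoint ℝ A B) C := by
  have h := dist_triangle A (midpoint ℝ A B) C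
  have h2 := dist_midpoint_half A B
  rw [dist_comm C A] at hCA
  rw [hAB] at h2
  linarith [h, h2, hCA ▸ (le_refl (dist A C))]

/-- If T is an equilateral triangle of side length > 2 with vertices A, B, C, then any
closed unit equilateral triangle contains at most one of the six points consisting of
the vertices of T and the midpoints of its sides. -/
theorem statement11 (s : ℝ) (hs : 2 < s) (A B C : Pt)
    (hAB : dist A B = s) (hBC : dist B C = s) (hCA : dist C A = s)
    (T : Set Pt) (hT : T = convexHull ℝ {A, B, C})
    (U : Set Pt) (hU : IsEquilateralTriangle U 1) :
    Set.Subsingleton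
      (({A, B, C, midpoint ℝ A B, midpoint ℝ B C, midpoint ℝ C A} : Set Pt) ∩ U) := by
  -- Any two points of U are at distance ≤ 1
  obtain ⟨-, D, E, F, hDE, hEF, hFD, hUeq⟩ := hU
  have hdiam : ∀ x ∈ U, ∀ y ∈ U, dist x y ≤ 1 := by
    intro x hx y hy
    rw [hUeq] at hx hy
    have h1 : Metric.diam (convexHull ℝ ({D, E, F} : Set Pt)) ≤ 1 := by
      rw [convexHull_diam]
      apply Metric.diam_le_of_forall_dist_le (by norm_num)
      intro a ha b hb
      simp only [Set.mem_insert_iff, Set.mem_singleton_iff] at ha hb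
      rcases ha with rfl | rfl | rfl <;> rcases hb with rfl | rfl | rfl <;>
        simp_all [dist_comm]
    have hbdd : Bornology.IsBounded (convexHull ℝ ({D, E, F} : Set Pt)) := by
      exact isBounded_convexHull.mpr (Set.toFinite _).isBounded
    exact (Metric.dist_le_diam_of_mem hbdd hx hy).trans h1
  -- Any two distinct points of the six-point set are at distance > 1
  intro x hx y hy
  by_contra hne
  have hle : dist x y ≤ 1 := hdiam x hx.2 y hy.2
  have hgt : 1 < dist x y := by
    have h2 : (1:ℝ) < s / 2 := by linarith
    have hBA : dist B A = s := by rw [dist_comm]; exact hAB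
    have hCB : dist C B = s := by rw [dist_comm]; exact hBC
    have hAC : dist A C = s := by rw [dist_comm]; exact hCA
    have hmABC := dist_mid_opp A B C s hAB hCA
    have hmBCA := dist_mid_opp B C A s hBC hAB
    have hmCAB := dist_mid_opp C A B s hCA hBC
    have hd1 := dist_midpoint_half A B
    have hd2 := dist_midpoint_half B A
    have hd3 := dist_midpoint_half B C
    have hd4 := dist_midpoint_half C B
    have hd5 := dist_midpoint_half C A
    have hd6 := dist_midpoint_half A C
    have hm1 := dist_mid_mid A B C
    have hm2 := dist_mid_mid B C A
    have hm3 := dist_mid_mid C A B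
    rw [dist_comm B A] at hd2
    rw [dist_comm C B] at hd4
    rw [dist_comm A C] at hd6
    have hsym1 : midpoint ℝ B A = midpoint ℝ A B := midpoint_comm (R := ℝ) B A
    have hsym2 : midpoint ℝ C B = midpoint ℝ B C := midpoint_comm (R := ℝ) C B
    have hsym3 : midpoint ℝ A C = midpoint ℝ C A := midpoint_comm (R := ℝ) A C
    rw [hsym1] at hd2; rw [hsym2] at hd4; rw [hsym3] at hd6
    have h6 := hx.1
    have h7 := hy.1
    simp only [Set.mem_insert_iff, Set.mem_singleton_iff] at h6 h7
    rcases h6 with rfl | rfl | rfl | rfl | rfl | rfl <;>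
      rcases h7 with rfl | rfl | rfl | rfl | rfl | rfl <;>
      first
        | exact absurd rfl hne
        | (rw [dist_comm]; linarith)
        | linarith
  linarith
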